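/- arXiv:2405.02532 — 11 statements merged into one kernel-verified Lean document; each statement's English description precedes it below -/
import Mathlib

section
/- Let (g, [·,·]_g) be a Lie algebra over a field K and let λ ∈ K. Then the bracket on the product vector space g × g defined by [(x,u),(y,v)]_M = ([x,v]_g − [y,u]_g, λ[x,y]_g + [u,v]_g) is a Lie algebra structure on g × g, and the subspace {0} × g is a Lie subalgebra of (g × g, [·,·]_M); hence (g ⊕_M g, g × {0}, {0} × g) is a quasi-twilled Lie algebra. -/
/-!
Writing `(x, u)` as `x t + u` with `t² = λ`, the bracket `[·,·]_M` is the bracket of the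
current algebra `L ⊗ K[t]/(t² - λ)`: bilinearity and antisymmetry are inherited from `L`
componentwise, and each component of the Jacobi identity is a combination of Jacobi
identities of `L`. On `{0} × L` the bracket is just the bracket of `L`.
-/

/-- A bracket `b` on a `K`-vector space `V` is a Lie algebra structure if it is
bilinear, alternating, and satisfies the Jacobi identity. -/
def IsLieBracketOn (K V : Type*) [Field K] [AddCommGroup V] [Module K V]
    (b : V → V → V) : Prop :=
  (∀ x y z : V, b (x + y) z = b x z + b y z) ∧
  (∀ (c : K) (x y : V), b (c • x) y = c • b x y) ∧
  (∀ x y z : V, b x (y + z) = b x y + b x z) ∧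
  (∀ (c : K) (x y : V), b x (c • y) = c • b x y) ∧
  (∀ x : V, b x x = 0) ∧
  (∀ x y z : V, b x (b y z) + b y (b z x) + b z (b x y) = 0)

theorem lie_lie_sub_lie_lie_add_lie_lie {L : Type*} [LieRing L] (a b c : L) :
    ⁅a, ⁅b, c⁆⁆ - ⁅b, ⁅a, c⁆⁆ + ⁅c, ⁅a, b⁆⁆ = 0 := by
  rw [← lie_lie, ← lie_skew c, add_neg_cancel]

namespace LieAlgebra

variable {R L : Type*} [CommRing R] [LieRing L] [LieAlgebra R L]

def twistedBracket (lam : R) (p q : L × L) : L × L :=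
  (⁅p.1, q.2⁆ - ⁅q.1, p.2⁆, lam • ⁅p.1, q.1⁆ + ⁅p.2, q.2⁆)

variable (lam : R)

theorem twistedBracket_add_left (p q r : L × L) :
    twistedBracket lam (p + q) r = twistedBracket lam p r + twistedBracket lam q r := by
  simp only [twistedBracket, Prod.fst_add, Prod.snd_add, add_lie, lie_add, Prod.mk_add_mk,
    Prod.ext_iff]
  constructor <;> module

theorem twistedBracket_add_right (p q r : L × L) :
    twistedBracket lam p (q + r) = twistedBracket lam p q + twistedBracket lam p r := by
  simp only [twistedBracket, Prod.fst_add, Prod.snd_add, add_lie, lie_add, Prod.mk_add_mk,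
    Prod.ext_iff]
  constructor <;> module

theorem twistedBracket_smul_left (c : R) (p q : L × L) :
    twistedBracket lam (c • p) q = c • twistedBracket lam p q := by
  simp only [twistedBracket, Prod.smul_fst, Prod.smul_snd, smul_lie, lie_smul, Prod.smul_mk,
    Prod.ext_iff]
  constructor <;> module

theorem twistedBracket_smul_right (c : R) (p q : L × L) :
    twistedBracket lam p (c • q) = c • twistedBracket lam p q := by
  simp only [twistedBracket, Prod.smul_fst, Prod.smul_snd, smul_lie, lie_smul, Prod.smul_mk,
    Prod.ext_iff]
  constructor <;> module

theorem twistedBracket_self (p : L × L) : twistedBracket lam p p = 0 := by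
  simp [twistedBracket]

theorem twistedBracket_jacobi (p q r : L × L) :
    twistedBracket lam p (twistedBracket lam q r) + twistedBracket lam q (twistedBracket lam r p)
      + twistedBracket lam r (twistedBracket lam p q) = 0 := by
  obtain ⟨x, u⟩ := p
  obtain ⟨y, v⟩ := q
  obtain ⟨z, w⟩ := r
  have lie_lie_left (a b c : L) : ⁅⁅a, b⁆, c⁆ = -⁅c, ⁅a, b⁆⁆ := (lie_skew _ c).symm
  simp only [twistedBracket, Prod.mk_add_mk, Prod.mk_eq_zero, lie_add, lie_sub, lie_smul,
    sub_lie, lie_lie_left]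
  -- the mixed terms, grouped by the one letter they take from one factor, are Jacobi identities
  constructor
  · linear_combination (norm := module) lam • lie_jacobi x y z
      + lie_lie_sub_lie_lie_add_lie_lie x v w + lie_lie_sub_lie_lie_add_lie_lie y w u
      + lie_lie_sub_lie_lie_add_lie_lie z u v
  · linear_combination (norm := module) lam • lie_lie_sub_lie_lie_add_lie_lie x y w
      + lam • lie_lie_sub_lie_lie_add_lie_lie z x v
      + lam • lie_lie_sub_lie_lie_add_lie_lie y z u + lie_jacobi u v w

theorem isLieBracketOn_twistedBracket {K : Type*} [Field K] [LieAlgebra K L] (lam : K) :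
    IsLieBracketOn K (L × L) (twistedBracket lam) :=
  ⟨twistedBracket_add_left lam, twistedBracket_smul_left lam, twistedBracket_add_right lam,
    twistedBracket_smul_right lam, twistedBracket_self lam, twistedBracket_jacobi lam⟩

theorem twistedBracket_mem_bot_prod_top {p q : L × L}
    (hp : p ∈ (⊥ : Submodule R L).prod ⊤) (hq : q ∈ (⊥ : Submodule R L).prod ⊤) :
    twistedBracket lam p q ∈ (⊥ : Submodule R L).prod ⊤ := by
  simp only [Submodule.mem_prod, Submodule.mem_bot, Submodule.mem_top, and_true] at hp hq ⊢
  simp [twistedBracket, hp, hq]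

end LieAlgebra

theorem Submodule.isCompl_top_prod_bot_bot_prod_top (R M : Type*) [Semiring R]
    [AddCommMonoid M] [Module R M] :
    IsCompl ((⊤ : Submodule R M).prod (⊥ : Submodule R M))
      ((⊥ : Submodule R M).prod (⊤ : Submodule R M)) := by
  rw [← Submodule.map_inl, ← Submodule.map_inr, Submodule.map_top, Submodule.map_top]
  exact LinearMap.isCompl_range_inl_inr

open LieAlgebra in
/-- For a Lie algebra `L` over `K` and `lam ∈ K`, the bracket
`[(x,u),(y,v)]_M = ([x,v] − [y,u], lam•[x,y] + [u,v])` is a Lie algebra structure on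
`L × L`, the subspace `{0} × L` is a Lie subalgebra, and `L × {0}`, `{0} × L` are
complementary; hence `(L ⊕_M L, L × {0}, {0} × L)` is a quasi-twilled Lie algebra. -/
theorem stmt0 (K L : Type*) [Field K] [LieRing L] [LieAlgebra K L] (lam : K) :
    IsLieBracketOn K (L × L)
      (fun p q => (⁅p.1, q.2⁆ - ⁅q.1, p.2⁆, lam • ⁅p.1, q.1⁆ + ⁅p.2, q.2⁆)) ∧
    (∀ p ∈ (⊥ : Submodule K L).prod (⊤ : Submodule K L),
      ∀ q ∈ (⊥ : Submodule K L).prod (⊤ : Submodule K L),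
        ((⁅p.1, q.2⁆ - ⁅q.1, p.2⁆, lam • ⁅p.1, q.1⁆ + ⁅p.2, q.2⁆) : L × L) ∈
          (⊥ : Submodule K L).prod (⊤ : Submodule K L)) ∧
    IsCompl ((⊤ : Submodule K L).prod (⊥ : Submodule K L))
      ((⊥ : Submodule K L).prod (⊤ : Submodule K L)) :=
  ⟨isLieBracketOn_twistedBracket lam, fun _ hp _ hq => twistedBracket_mem_bot_prod_top lam hp hq,
    Submodule.isCompl_top_prod_bot_bot_prod_top K L⟩
end

section
/- Let (g, [·,·]_g) and (h, [·,·]_h) be Lie algebras over a field K, let ρ : g → End(h) be a representation of g on the underlying vector space of h and η : h → End(g) a representation of h on the underlying vector space of g, and suppose that for all x, y ∈ g and u, v ∈ h: (i) ρ(x)[u,v]_h = [ρ(x)u, v]_h + [u, ρ(x)v]_h + ρ(η(v)x)u − ρ(η(u)x)v, and (ii) η(u)[x,y]_g = [η(u)x, y]_g + [x, η(u)y]_g + η(ρ(y)u)x − η(ρ(x)u)y. Then the bracket on g × h defined by [(x,u),(y,v)]_⋈ = ([x,y]_g + η(u)y − η(v)x, [u,v]_h + ρ(x)v − ρ(y)u)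 is a Lie algebra structure on g × h. -/
def matchedPairBracket {K L H : Type*} [CommRing K] [LieRing L] [LieAlgebra K L]
    [LieRing H] [LieAlgebra K H] (ρ : L →ₗ[K] Module.End K H) (η : H →ₗ[K] Module.End K L)
    (p q : L × H) : L × H :=
  (⁅p.1, q.1⁆ + η p.2 q.1 - η q.2 p.1, ⁅p.2, q.2⁆ + ρ p.1 q.2 - ρ q.1 p.2)

section MatchedPair

variable {K L H : Type*} [CommRing K] [LieRing L] [LieAlgebra K L] [LieRing H] [LieAlgebra K H]
  (ρ : L →ₗ[K] Module.End K H) (η : H →ₗ[K] Module.End K L)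

theorem matchedPairBracket_add_left (p q r : L × H) :
    matchedPairBracket ρ η (p + q) r =
      matchedPairBracket ρ η p r + matchedPairBracket ρ η q r := by
  simp only [matchedPairBracket, Prod.fst_add, Prod.snd_add, add_lie, map_add,
    LinearMap.add_apply, Prod.mk_add_mk, Prod.mk.injEq]
  constructor <;> abel

theorem matchedPairBracket_smul_left (c : K) (p q : L × H) :
    matchedPairBracket ρ η (c • p) q = c • matchedPairBracket ρ η p q := by
  simp only [matchedPairBracket, Prod.smul_fst, Prod.smul_snd, smul_lie, map_smul,
    LinearMap.smul_apply, Prod.smul_mk, Prod.mk.injEq]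
  constructor <;> module

theorem matchedPairBracket_add_right (p q r : L × H) :
    matchedPairBracket ρ η p (q + r) =
      matchedPairBracket ρ η p q + matchedPairBracket ρ η p r := by
  simp only [matchedPairBracket, Prod.fst_add, Prod.snd_add, lie_add, map_add,
    LinearMap.add_apply, Prod.mk_add_mk, Prod.mk.injEq]
  constructor <;> abel

theorem matchedPairBracket_smul_right (c : K) (p q : L × H) :
    matchedPairBracket ρ η p (c • q) = c • matchedPairBracket ρ η p q := by
  simp only [matchedPairBracket, Prod.smul_fst, Prod.smul_snd, lie_smul, map_smul,
    LinearMap.smul_apply, Prod.smul_mk, Prod.mk.injEq]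
  constructor <;> module

theorem matchedPairBracket_self (p : L × H) : matchedPairBracket ρ η p p = 0 := by
  simp [matchedPairBracket]

theorem swap_matchedPairBracket (p q : L × H) :
    (matchedPairBracket ρ η p q).swap = matchedPairBracket η ρ p.swap q.swap :=
  rfl

theorem matchedPairBracket_jacobi_fst (hη : ∀ u v : H, η ⁅u, v⁆ = η u * η v - η v * η u)
    (hcomp : ∀ (u : H) (x y : L),
      η u ⁅x, y⁆ = ⁅η u x, y⁆ + ⁅x, η u y⁆ + η (ρ y u) x - η (ρ x u) y)
    (p q r : L × H) :
    (matchedPairBracket ρ η p (matchedPairBracket ρ η q r) +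
      matchedPairBracket ρ η q (matchedPairBracket ρ η r p) +
      matchedPairBracket ρ η r (matchedPairBracket ρ η p q)).1 = 0 := by
  obtain ⟨x, u⟩ := p
  obtain ⟨y, v⟩ := q
  obtain ⟨z, w⟩ := r
  simp only [matchedPairBracket, Prod.fst_add, lie_add, lie_sub, map_add, map_sub,
    LinearMap.add_apply, LinearMap.sub_apply, hη, Module.End.mul_apply, hcomp]
  rw [← lie_skew x (η v z), ← lie_skew y (η w x), ← lie_skew z (η u y)]
  linear_combination (norm := abel) lie_jacobi x y z

theorem matchedPairBracket_jacobi
    (hρ : ∀ x y : L, ρ ⁅x, y⁆ = ρ x * ρ y - ρ y * ρ x)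
    (hη : ∀ u v : H, η ⁅u, v⁆ = η u * η v - η v * η u)
    (hcomp1 : ∀ (x : L) (u v : H),
      ρ x ⁅u, v⁆ = ⁅ρ x u, v⁆ + ⁅u, ρ x v⁆ + ρ (η v x) u - ρ (η u x) v)
    (hcomp2 : ∀ (u : H) (x y : L),
      η u ⁅x, y⁆ = ⁅η u x, y⁆ + ⁅x, η u y⁆ + η (ρ y u) x - η (ρ x u) y)
    (p q r : L × H) :
    matchedPairBracket ρ η p (matchedPairBracket ρ η q r) +
      matchedPairBracket ρ η q (matchedPairBracket ρ η r p) +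
      matchedPairBracket ρ η r (matchedPairBracket ρ η p q) = 0 := by
  refine Prod.ext (matchedPairBracket_jacobi_fst ρ η hη hcomp2 p q r) ?_
  have := matchedPairBracket_jacobi_fst η ρ hρ hcomp1 p.swap q.swap r.swap
  simpa only [← swap_matchedPairBracket, ← Prod.swap_add, Prod.fst_swap, Prod.snd_zero]
    using this

end MatchedPair

/-- For a matched pair of Lie algebras `(L, H; ρ, η)`, the bracket
`[(x,u),(y,v)]_⋈ = ([x,y] + η(u)y − η(v)x, [u,v] + ρ(x)v − ρ(y)u)` is a Lie
algebra structure on `L × H`. -/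
theorem stmt3 (K L H : Type*) [Field K] [LieRing L] [LieAlgebra K L]
    [LieRing H] [LieAlgebra K H]
    (ρ : L →ₗ[K] Module.End K H) (η : H →ₗ[K] Module.End K L)
    (hρ : ∀ x y : L, ρ ⁅x, y⁆ = ρ x * ρ y - ρ y * ρ x)
    (hη : ∀ u v : H, η ⁅u, v⁆ = η u * η v - η v * η u)
    (hcomp1 : ∀ (x : L) (u v : H),
      ρ x ⁅u, v⁆ = ⁅ρ x u, v⁆ + ⁅u, ρ x v⁆ + ρ (η v x) u - ρ (η u x) v)
    (hcomp2 : ∀ (u : H) (x y : L),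
      η u ⁅x, y⁆ = ⁅η u x, y⁆ + ⁅x, η u y⁆ + η (ρ y u) x - η (ρ x u) y) :
    IsLieBracketOn K (L × H)
      (fun p q => (⁅p.1, q.1⁆ + η p.2 q.1 - η q.2 p.1,
                   ⁅p.2, q.2⁆ + ρ p.1 q.2 - ρ q.1 p.2)) := by
  exact ⟨matchedPairBracket_add_left ρ η, matchedPairBracket_smul_left ρ η,
    matchedPairBracket_add_right ρ η, matchedPairBracket_smul_right ρ η,
    matchedPairBracket_self ρ η, matchedPairBracket_jacobi ρ η hρ hη hcomp1 hcomp2⟩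
end

section
/- Let (G, g, h) be a quasi-twilled Lie algebra over a field K and let D : g → h be a deformation map of type I. Then G is the internal direct sum of the linear subspaces Gr(D) = { x + D(x) : x ∈ g } and h, and both Gr(D) and h are Lie subalgebras of G (so that (h, Gr(D)) is a pair of complementary Lie subalgebras of G, i.e., a matched pair of Lie algebras). -/
/-!
The graph of any linear map `D : g → h` is a complement of `h` as soon as `g` is, since
`x = (x + D x) - D x`. A vector lies on the graph once `D` sends its `g`-component to its
`h`-component, and for brackets of graph vectors this is exactly the type I condition.
-/

section GraphOfMapBetweenSubmodules

variable {R M : Type*} [Ring R] [AddCommGroup M] [Module R M] {g h : Submodule R M}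

theorem isCompl_range_subtype_add_subtype_comp (hgh : IsCompl g h) (D : g →ₗ[R] h) :
    IsCompl (LinearMap.range (g.subtype + h.subtype ∘ₗ D)) h := by
  constructor
  · rw [Submodule.disjoint_def]
    rintro _ ⟨x, rfl⟩ hxD
    have hxh : (x : M) ∈ h := by
      simpa using h.sub_mem hxD (D x).2
    have hx : x = 0 := Subtype.ext (hgh.disjoint.le_bot ⟨x.2, hxh⟩)
    simp [hx]
  · rw [codisjoint_iff, eq_top_iff, ← hgh.codisjoint.eq_top, sup_le_iff]
    refine ⟨fun x hx => ?_, le_sup_right⟩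
    have hgraph : (x : M) + D ⟨x, hx⟩ ∈ LinearMap.range (g.subtype + h.subtype ∘ₗ D) :=
      ⟨⟨x, hx⟩, rfl⟩
    simpa using Submodule.sub_mem_sup hgraph (D ⟨x, hx⟩).2

theorem mem_range_subtype_add_subtype_comp_of_map_proj_eq (D : g →ₗ[R] h)
    (Pg : M →ₗ[R] g) (Ph : M →ₗ[R] h) {z : M} (hz : (Pg z : M) + Ph z = z)
    (hD : D (Pg z) = Ph z) :
    z ∈ LinearMap.range (g.subtype + h.subtype ∘ₗ D) :=
  ⟨Pg z, by simp [hD, hz]⟩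

end GraphOfMapBetweenSubmodules

/-- Let `(G, g, h)` be a quasi-twilled Lie algebra with projections
`Pg`, `Ph`, and let `D : g → h` be a deformation map of type I. Then `G` is the
internal direct sum of `Gr(D) = { x + D(x) : x ∈ g }` and `h`, and both `Gr(D)`
and `h` are Lie subalgebras of `G`. -/
theorem stmt6 (K G : Type*) [Field K] [LieRing G] [LieAlgebra K G]
    (g h : Submodule K G) (hcompl : IsCompl g h)
    (hsub : ∀ u ∈ h, ∀ v ∈ h, ⁅u, v⁆ ∈ h)
    (Pg : G →ₗ[K] g) (Ph : G →ₗ[K] h)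
    (hP : ∀ X : G, (Pg X : G) + (Ph X : G) = X)
    (D : g →ₗ[K] h)
    (hD : ∀ x y : g, D (Pg ⁅(x : G) + (D x : G), (y : G) + (D y : G)⁆) =
        Ph ⁅(x : G) + (D x : G), (y : G) + (D y : G)⁆) :
    IsCompl (LinearMap.range (g.subtype + h.subtype ∘ₗ D)) h ∧
    (∀ a ∈ LinearMap.range (g.subtype + h.subtype ∘ₗ D),
      ∀ b ∈ LinearMap.range (g.subtype + h.subtype ∘ₗ D),
        ⁅a, b⁆ ∈ LinearMap.range (g.subtype + h.subtype ∘ₗ D)) ∧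
    (∀ u ∈ h, ∀ v ∈ h, ⁅u, v⁆ ∈ h) := by
  refine ⟨isCompl_range_subtype_add_subtype_comp hcompl D, ?_, hsub⟩
  rintro _ ⟨x, rfl⟩ _ ⟨y, rfl⟩
  exact mem_range_subtype_add_subtype_comp_of_map_proj_eq D Pg Ph (hP _) (hD x y)
end

section
/- Let (G, g, h) be a quasi-twilled Lie algebra over a field K and let D : g → h be a linear map. Define φ : G → G by φ(x + u) = x + D(x) + u for x ∈ g, u ∈ h, and let Ω^D(X, Y) := φ^{-1}([φ(X), φ(Y)]) be the twisted bracket on G. Then D is a deformation map of type I of (G, g, h) if and only if g is a Lie subalgebra of (G, Ω^D) (in which case g and h are complementary Lie subalgebras of (G, Ω^D), i.e., they form a matched pair of Lie algebras). -/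
/-!
Since `φ` is bijective with inverse `ψ` and sends `x ∈ g` to `x + D x`, an element `Z` satisfies
`ψ Z ∈ g` exactly when `Z` lies on the graph `{x + D x | x ∈ g}` of `D`, and by uniqueness of the
decomposition `G = g ⊕ h` that happens exactly when `D (Pg Z) = Ph Z`. Applied to
`Z = ⁅φ x, φ y⁆ = ⁅x + D x, y + D y⁆` this is the claimed equivalence.
-/

section Decomposition

variable {K G : Type*} [Ring K] [AddCommGroup G] [Module K G] {g h : Submodule K G}

lemma proj_add_eq_of_isCompl (hc : IsCompl g h) (Pg : G → g) (Ph : G → h)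
    (hP : ∀ X : G, (Pg X : G) + (Ph X : G) = X) (x : g) (u : h) :
    Pg ((x : G) + (u : G)) = x ∧ Ph ((x : G) + (u : G)) = u :=
  Prod.ext_iff.mp <| (Submodule.existsUnique_add_of_isCompl_prod hc ((x : G) + (u : G))).unique
    (y₁ := (Pg _, Ph _)) (y₂ := (x, u)) (hP _) rfl

lemma apply_proj_eq_proj_iff_exists_add (hc : IsCompl g h) (Pg : G → g) (Ph : G → h)
    (hP : ∀ X : G, (Pg X : G) + (Ph X : G) = X) (D : g → h) (Z : G) :
    D (Pg Z) = Ph Z ↔ ∃ x : g, (x : G) + (D x : G) = Z := by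
  constructor
  · intro hZ
    exact ⟨Pg Z, by rw [hZ, hP]⟩
  · rintro ⟨x, rfl⟩
    obtain ⟨hPg, hPh⟩ := proj_add_eq_of_isCompl hc Pg Ph hP x (D x)
    rw [hPg, hPh]

lemma inverse_mem_iff_exists_add {φ ψ : G → G} (D : g → h)
    (hφ : ∀ x : g, φ x = (x : G) + (D x : G))
    (hψ1 : ∀ X : G, ψ (φ X) = X) (hψ2 : ∀ X : G, φ (ψ X) = X) (Z : G) :
    ψ Z ∈ g ↔ ∃ x : g, (x : G) + (D x : G) = Z := by
  constructor
  · intro hZ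
    exact ⟨⟨ψ Z, hZ⟩, by rw [← hφ, hψ2]⟩
  · rintro ⟨x, rfl⟩
    rw [← hφ, hψ1]
    exact x.2

end Decomposition

theorem stmt8_general (K G : Type*) [Field K] [LieRing G] [LieAlgebra K G]
    (g h : Submodule K G) (hcompl : IsCompl g h)
    (Pg : G →ₗ[K] g) (Ph : G →ₗ[K] h)
    (hP : ∀ X : G, (Pg X : G) + (Ph X : G) = X)
    (D : g →ₗ[K] h)
    (φ ψ : G →ₗ[K] G)
    (hφ : ∀ (x : g) (u : h), φ ((x : G) + (u : G)) = (x : G) + (D x : G) + (u : G))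
    (hψ1 : ∀ X : G, ψ (φ X) = X) (hψ2 : ∀ X : G, φ (ψ X) = X) :
    (∀ x y : g, D (Pg ⁅(x : G) + (D x : G), (y : G) + (D y : G)⁆) =
        Ph ⁅(x : G) + (D x : G), (y : G) + (D y : G)⁆) ↔
    (∀ x ∈ g, ∀ y ∈ g, ψ ⁅φ x, φ y⁆ ∈ g) := by
  have hφg : ∀ x : g, φ x = (x : G) + (D x : G) := fun x => by simpa using hφ x 0
  have key : ∀ Z : G, D (Pg Z) = Ph Z ↔ ψ Z ∈ g := fun Z =>
    (apply_proj_eq_proj_iff_exists_add hcompl Pg Ph hP D Z).trans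
      (inverse_mem_iff_exists_add D hφg hψ1 hψ2 Z).symm
  constructor
  · intro H x hx y hy
    have hbracket := (key _).mp (H ⟨x, hx⟩ ⟨y, hy⟩)
    rwa [← hφg, ← hφg] at hbracket
  · intro H x y
    rw [key, ← hφg, ← hφg]
    exact H x x.2 y y.2

/-- Let `(G, g, h)` be a quasi-twilled Lie algebra with projections
`Pg`, `Ph`, let `D : g → h` be linear, `φ(x + u) = x + D(x) + u` the associated
automorphism with linear inverse `ψ`, and `Ω^D(X,Y) = ψ⁅φX, φY⁆` the twisted
bracket. Then `D` is a deformation map of type I if and only if `g` is a Lie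
subalgebra of `(G, Ω^D)`. -/
theorem stmt8 (K G : Type*) [Field K] [LieRing G] [LieAlgebra K G]
    (g h : Submodule K G) (hcompl : IsCompl g h)
    (hsub : ∀ u ∈ h, ∀ v ∈ h, ⁅u, v⁆ ∈ h)
    (Pg : G →ₗ[K] g) (Ph : G →ₗ[K] h)
    (hP : ∀ X : G, (Pg X : G) + (Ph X : G) = X)
    (D : g →ₗ[K] h)
    (φ ψ : G →ₗ[K] G)
    (hφ : ∀ (x : g) (u : h), φ ((x : G) + (u : G)) = (x : G) + (D x : G) + (u : G))
    (hψ1 : ∀ X : G, ψ (φ X) = X) (hψ2 : ∀ X : G, φ (ψ X) = X) :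
    (∀ x y : g, D (Pg ⁅(x : G) + (D x : G), (y : G) + (D y : G)⁆) =
        Ph ⁅(x : G) + (D x : G), (y : G) + (D y : G)⁆) ↔
    (∀ x ∈ g, ∀ y ∈ g, ψ ⁅φ x, φ y⁆ ∈ g) :=
  stmt8_general K G g h hcompl Pg Ph hP D φ ψ hφ hψ1 hψ2
end

section
/- Let (G, g, h) be a quasi-twilled Lie algebra over a field K and let D : g → h be a deformation map of type I. Then the bracket on g defined by [x, y]^D := P_g([x + D(x), y + D(y)]) is a Lie algebra structure on g, and the map ρ^D : g → End(h) defined by ρ^D(x)(v) := P_h([x + D(x), v]) − D(P_g([x + D(x), v])) is a representation of the Lie algebra (g, [·,·]^D) on the vector space h, i.e., ρ^D([x,y]^D) = ρ^D(x) ∘ ρ^D(y) − ρ^D(y) ∘ ρ^D(x) for all x, y ∈ g. -/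
variable {K G : Type*} [Field K] [LieRing G] [LieAlgebra K G]
  {g h : Submodule K G}

/-- The bracket `[x, y]^D = P_g⁅x + Dx, y + Dy⁆` on `g`. -/
def brD (Pg : G →ₗ[K] g) (D : g →ₗ[K] h) (x y : g) : g :=
  Pg ⁅(x : G) + (D x : G), (y : G) + (D y : G)⁆

/-- The map `ρ^D(x)(v) = P_h⁅x + Dx, v⁆ − D(P_g⁅x + Dx, v⁆)`. -/
def rhoD (Pg : G →ₗ[K] g) (Ph : G →ₗ[K] h) (D : g →ₗ[K] h) (x : g) (v : h) : h :=
  Ph ⁅(x : G) + (D x : G), (v : G)⁆ - D (Pg ⁅(x : G) + (D x : G), (v : G)⁆)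

/-!
The graph `{x + D x}` of a deformation map is a Lie subalgebra of `G` on which `P_g` restricts
to a linear isomorphism onto `g`, and `[·,·]^D` is the bracket of this subalgebra transported
to `g`. Likewise `ρ^D(x)` is `ad (x + D x)` followed by the projection `Q` onto `h` along the
graph; since `Q` kills brackets of two graph elements, `Q ⁅x + D x, Q Y⁆ = Q ⁅x + D x, Y⁆`, and
the representation property becomes the Jacobi identity in `G`.
-/

theorem isLieBracketOn_of_map_lie {V : Type*} [AddCommGroup V] [Module K V]
    (F : V →ₗ[K] G) (P : G →ₗ[K] V)
    (hF : ∀ x y : V, F (P ⁅F x, F y⁆) = ⁅F x, F y⁆) :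
    IsLieBracketOn K V (fun x y => P ⁅F x, F y⁆) := by
  refine ⟨?_, ?_, ?_, ?_, ?_, ?_⟩
  · intro x y z
    simp only [map_add, add_lie]
  · intro c x y
    simp only [map_smul, smul_lie]
  · intro x y z
    simp only [map_add, lie_add]
  · intro c x y
    simp only [map_smul, lie_smul]
  · intro x
    simp only [lie_self, map_zero]
  · intro x y z
    simp only [hF]
    rw [← map_add, ← map_add, lie_jacobi, map_zero]

section Projection

variable (Pg : G →ₗ[K] g) (Ph : G →ₗ[K] h)

theorem coe_projection_of_mem_left (hdisj : Disjoint g h)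
    (hP : ∀ X : G, (Pg X : G) + (Ph X : G) = X) {X : G} (hX : X ∈ g) : (Pg X : G) = X := by
  have hPh : (Ph X : G) ∈ g := by
    rw [eq_sub_of_add_eq' (hP X)]
    exact g.sub_mem hX (Pg X).2
  have hPh_zero : (Ph X : G) = 0 :=
    (Submodule.disjoint_def.mp hdisj) _ hPh (Ph X).2
  simpa [hPh_zero] using hP X

theorem coe_projection_of_mem_right (hdisj : Disjoint g h)
    (hP : ∀ X : G, (Pg X : G) + (Ph X : G) = X) {X : G} (hX : X ∈ h) : (Pg X : G) = 0 := by
  have hPg : (Pg X : G) ∈ h := by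
    rw [eq_sub_of_add_eq (hP X)]
    exact h.sub_mem hX (Ph X).2
  exact (Submodule.disjoint_def.mp hdisj) _ (Pg X).2 hPg

end Projection

def graphEmb (D : g →ₗ[K] h) : g →ₗ[K] G :=
  g.subtype + h.subtype.comp D

@[simp]
theorem graphEmb_apply (D : g →ₗ[K] h) (x : g) : graphEmb D x = (x : G) + (D x : G) := rfl

/-- The projection of `G` onto `h` along the graph of `D`. -/
def projAlongGraph (Pg : G →ₗ[K] g) (D : g →ₗ[K] h) : G →ₗ[K] G :=
  LinearMap.id - (graphEmb D).comp Pg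

theorem projAlongGraph_apply (Pg : G →ₗ[K] g) (D : g →ₗ[K] h) (X : G) :
    projAlongGraph Pg D X = X - graphEmb D (Pg X) := rfl

def IsDeformationMap (Pg : G →ₗ[K] g) (Ph : G →ₗ[K] h) (D : g →ₗ[K] h) : Prop :=
  ∀ x y : g, D (Pg ⁅(x : G) + (D x : G), (y : G) + (D y : G)⁆) =
    Ph ⁅(x : G) + (D x : G), (y : G) + (D y : G)⁆

section DeformationMap

variable {Pg : G →ₗ[K] g} {Ph : G →ₗ[K] h} {D : g →ₗ[K] h}

theorem projection_graphEmb (hdisj : Disjoint g h)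
    (hP : ∀ X : G, (Pg X : G) + (Ph X : G) = X) (z : g) : Pg (graphEmb D z) = z := by
  ext
  rw [graphEmb_apply, map_add, Submodule.coe_add,
    coe_projection_of_mem_left Pg Ph hdisj hP z.2,
    coe_projection_of_mem_right Pg Ph hdisj hP (D z).2, add_zero]

theorem graphEmb_brD (hP : ∀ X : G, (Pg X : G) + (Ph X : G) = X)
    (hD : IsDeformationMap Pg Ph D) (x y : g) :
    graphEmb D (brD Pg D x y) = ⁅graphEmb D x, graphEmb D y⁆ := by
  rw [graphEmb_apply, brD, hD x y]
  exact hP _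

theorem isLieBracketOn_brD (hP : ∀ X : G, (Pg X : G) + (Ph X : G) = X)
    (hD : IsDeformationMap Pg Ph D) :
    IsLieBracketOn K g (brD Pg D) :=
  isLieBracketOn_of_map_lie (graphEmb D) Pg fun x y => graphEmb_brD hP hD x y

theorem coe_rhoD (hP : ∀ X : G, (Pg X : G) + (Ph X : G) = X) (x : g) (v : h) :
    (rhoD Pg Ph D x v : G) = projAlongGraph Pg D ⁅graphEmb D x, (v : G)⁆ := by
  rw [rhoD, Submodule.coe_sub, eq_sub_of_add_eq' (hP _), projAlongGraph_apply,
    graphEmb_apply, graphEmb_apply]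
  abel

theorem projAlongGraph_lie_projAlongGraph (hdisj : Disjoint g h)
    (hP : ∀ X : G, (Pg X : G) + (Ph X : G) = X)
    (hD : IsDeformationMap Pg Ph D) (x : g) (Y : G) :
    projAlongGraph Pg D ⁅graphEmb D x, projAlongGraph Pg D Y⁆ =
      projAlongGraph Pg D ⁅graphEmb D x, Y⁆ := by
  have hkill : projAlongGraph Pg D ⁅graphEmb D x, graphEmb D (Pg Y)⁆ = 0 := by
    rw [← graphEmb_brD hP hD, projAlongGraph_apply, projection_graphEmb hdisj hP, sub_self]
  rw [projAlongGraph_apply Pg D Y, lie_sub, map_sub, hkill, sub_zero]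

theorem rhoD_brD (hdisj : Disjoint g h)
    (hP : ∀ X : G, (Pg X : G) + (Ph X : G) = X)
    (hD : IsDeformationMap Pg Ph D) (x y : g) (v : h) :
    rhoD Pg Ph D (brD Pg D x y) v =
      rhoD Pg Ph D x (rhoD Pg Ph D y v) - rhoD Pg Ph D y (rhoD Pg Ph D x v) := by
  ext
  simp only [Submodule.coe_sub, coe_rhoD hP, graphEmb_brD hP hD,
    projAlongGraph_lie_projAlongGraph hdisj hP hD, lie_lie, map_sub]

end DeformationMap

theorem stmt9_general (K G : Type*) [Field K] [LieRing G] [LieAlgebra K G]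
    (g h : Submodule K G) (hcompl : IsCompl g h)
    (Pg : G →ₗ[K] g) (Ph : G →ₗ[K] h)
    (hP : ∀ X : G, (Pg X : G) + (Ph X : G) = X)
    (D : g →ₗ[K] h)
    (hD : ∀ x y : g, D (Pg ⁅(x : G) + (D x : G), (y : G) + (D y : G)⁆) =
        Ph ⁅(x : G) + (D x : G), (y : G) + (D y : G)⁆) :
    IsLieBracketOn K g (brD Pg D) ∧
    (∀ (x y : g) (v : h),
      rhoD Pg Ph D (brD Pg D x y) v =
        rhoD Pg Ph D x (rhoD Pg Ph D y v) - rhoD Pg Ph D y (rhoD Pg Ph D x v)) :=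
  ⟨isLieBracketOn_brD hP hD, rhoD_brD hcompl.disjoint hP hD⟩

/-- Let `(G, g, h)` be a quasi-twilled Lie algebra with projections
`Pg`, `Ph`, and let `D : g → h` be a deformation map of type I. Then
`[x, y]^D = P_g⁅x + Dx, y + Dy⁆` is a Lie algebra structure on `g`, and
`ρ^D(x)(v) = P_h⁅x + Dx, v⁆ − D(P_g⁅x + Dx, v⁆)` is a representation of
`(g, [·,·]^D)` on the vector space `h`. -/
theorem stmt9 (K G : Type*) [Field K] [LieRing G] [LieAlgebra K G]
    (g h : Submodule K G) (hcompl : IsCompl g h)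
    (hsub : ∀ u ∈ h, ∀ v ∈ h, ⁅u, v⁆ ∈ h)
    (Pg : G →ₗ[K] g) (Ph : G →ₗ[K] h)
    (hP : ∀ X : G, (Pg X : G) + (Ph X : G) = X)
    (D : g →ₗ[K] h)
    (hD : ∀ x y : g, D (Pg ⁅(x : G) + (D x : G), (y : G) + (D y : G)⁆) =
        Ph ⁅(x : G) + (D x : G), (y : G) + (D y : G)⁆) :
    IsLieBracketOn K g (brD Pg D) ∧
    (∀ (x y : g) (v : h),
      rhoD Pg Ph D (brD Pg D x y) v =
        rhoD Pg Ph D x (rhoD Pg Ph D y v) - rhoD Pg Ph D y (rhoD Pg Ph D x v)) :=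
  stmt9_general K G g h hcompl Pg Ph hP D hD
end

section
/- Let (g, [·,·]_g) be a Lie algebra over a field K, λ ∈ K, and let D : g → g be a modified r-matrix, i.e., [D(x), D(y)]_g − D([D(x), y]_g + [x, D(y)]_g) = −λ[x,y]_g for all x, y ∈ g. Then the bracket [x, y]_D := [x, D(y)]_g − [y, D(x)]_g is a Lie algebra structure on g, and the map ρ^D : g → End(g) defined by ρ^D(x)(u) = [D(x), u]_g − D([x, u]_g) is a representation of the Lie algebra (g, [·,·]_D) on the vector space g, i.e., ρ^D([x,y]_D) = ρ^D(x) ∘ ρ^D(y) − ρ^D(y) ∘ ρ^D(x) for all x, y ∈ g. -/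
variable {K L : Type*} [Field K] [LieRing L] [LieAlgebra K L]

/-- The bracket `[x, y]_D = [x, Dy] − [y, Dx]` induced by a modified r-matrix. -/
def brMR (D : L →ₗ[K] L) (x y : L) : L := ⁅x, D y⁆ - ⁅y, D x⁆

/-- The map `ρ^D(x)(u) = [Dx, u] − D[x, u]`. -/
def rhoMR (D : L →ₗ[K] L) (x u : L) : L := ⁅D x, u⁆ - D ⁅x, u⁆

def IsModifiedRMatrix (lam : K) (D : L →ₗ[K] L) : Prop :=
  ∀ x y : L, ⁅D x, D y⁆ - D (⁅D x, y⁆ + ⁅x, D y⁆) = -(lam • ⁅x, y⁆)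

section

variable (D : L →ₗ[K] L)

theorem brMR_eq_add (x y : L) : brMR D x y = ⁅D x, y⁆ + ⁅x, D y⁆ := by
  rw [brMR, ← lie_skew y (D x)]
  abel

theorem isLieBracketOn_brMR_of_jacobi
    (jacobi : ∀ x y z : L, brMR D x (brMR D y z) + brMR D y (brMR D z x) +
      brMR D z (brMR D x y) = 0) :
    IsLieBracketOn K L (brMR D) := by
  refine ⟨?_, ?_, ?_, ?_, fun x ↦ sub_self _, jacobi⟩
  · intro x y z; simp only [brMR, add_lie, map_add, lie_add]; abel
  · intro c x y; simp only [brMR, smul_lie, map_smul, lie_smul, smul_sub]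
  · intro x y z; simp only [brMR, add_lie, map_add, lie_add]; abel
  · intro c x y; simp only [brMR, smul_lie, map_smul, lie_smul, smul_sub]

end

namespace IsModifiedRMatrix

variable {lam : K} {D : L →ₗ[K] L} (hD : IsModifiedRMatrix lam D)
include hD

theorem map_brMR (x y : L) : D (brMR D x y) = ⁅D x, D y⁆ + lam • ⁅x, y⁆ := by
  rw [brMR_eq_add]
  linear_combination (norm := abel) -hD x y

theorem lie_map_map (x y : L) :
    ⁅D x, D y⁆ = D ⁅D x, y⁆ + D ⁅x, D y⁆ - lam • ⁅x, y⁆ := by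
  have h := hD x y
  rw [map_add] at h
  linear_combination (norm := abel) h

theorem brMR_brMR (x y z : L) :
    brMR D x (brMR D y z) =
      ⁅D x, ⁅D y, z⁆⁆ + ⁅D x, ⁅y, D z⁆⁆ + ⁅x, ⁅D y, D z⁆⁆ + lam • ⁅x, ⁅y, z⁆⁆ := by
  rw [brMR_eq_add D x, hD.map_brMR, brMR_eq_add]
  simp only [lie_add, lie_smul]
  abel

theorem brMR_jacobi (x y z : L) :
    brMR D x (brMR D y z) + brMR D y (brMR D z x) + brMR D z (brMR D x y) = 0 := by
  rw [hD.brMR_brMR, hD.brMR_brMR, hD.brMR_brMR]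
  linear_combination (norm := module) lie_jacobi (D x) (D y) z + lie_jacobi (D y) (D z) x +
    lie_jacobi (D z) (D x) y + lam • lie_jacobi x y z

theorem rhoMR_rhoMR (x y u : L) :
    rhoMR D x (rhoMR D y u) =
      ⁅D x, ⁅D y, u⁆⁆ - D ⁅D x, ⁅y, u⁆⁆ - D ⁅x, ⁅D y, u⁆⁆ + lam • ⁅x, ⁅y, u⁆⁆ := by
  simp only [rhoMR, lie_sub, map_sub, hD.lie_map_map]
  abel

theorem rhoMR_brMR (x y u : L) :
    rhoMR D (brMR D x y) u = rhoMR D x (rhoMR D y u) - rhoMR D y (rhoMR D x u) := by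
  rw [hD.rhoMR_rhoMR, hD.rhoMR_rhoMR, rhoMR, hD.map_brMR, brMR_eq_add]
  simp only [add_lie, smul_lie, lie_lie, map_add, map_sub]
  module

theorem isLieBracketOn_brMR : IsLieBracketOn K L (brMR D) :=
  isLieBracketOn_brMR_of_jacobi D hD.brMR_jacobi

end IsModifiedRMatrix

/-- Let `D` be a modified r-matrix on a Lie algebra `L`, i.e.
`[Dx, Dy] − D([Dx, y] + [x, Dy]) = −lam•[x, y]`. Then `[x, y]_D = [x, Dy] − [y, Dx]`
is a Lie algebra structure on `L`, and `ρ^D(x)(u) = [Dx, u] − D[x, u]` is a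
representation of `(L, [·,·]_D)` on the vector space `L`. -/
theorem stmt10 (K L : Type*) [Field K] [LieRing L] [LieAlgebra K L]
    (lam : K) (D : L →ₗ[K] L)
    (hD : ∀ x y : L, ⁅D x, D y⁆ - D (⁅D x, y⁆ + ⁅x, D y⁆) = -(lam • ⁅x, y⁆)) :
    IsLieBracketOn K L (brMR D) ∧
    (∀ x y u : L,
      rhoMR D (brMR D x y) u = rhoMR D x (rhoMR D y u) - rhoMR D y (rhoMR D x u)) := by
  have hD : IsModifiedRMatrix lam D := hD
  exact ⟨hD.isLieBracketOn_brMR, hD.rhoMR_brMR⟩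
end

section
/- Let (g, [·,·]_g) be a Lie algebra over a field K and λ ∈ K. Equip g × g with the Lie bracket [(x,u),(y,v)]_M = ([x,v]_g − [y,u]_g, λ[x,y]_g + [u,v]_g). Then a linear map D : g → g satisfies the modified Yang-Baxter equation [D(x), D(y)]_g − D([D(x), y]_g + [x, D(y)]_g) = −λ[x,y]_g for all x, y ∈ g if and only if the graph Gr(D) = { (x, D(x)) : x ∈ g } is a Lie subalgebra of (g × g, [·,·]_M). -/
/-! For `p = (x, D x)` and `q = (y, D y)` the first component of `[p, q]_M` is
`[x, D y] - [y, D x] = [D x, y] + [x, D y]` by antisymmetry, so `[p, q]_M ∈ Gr(D)` says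
`D ([D x, y] + [x, D y]) = λ [x, y] + [D x, D y]`, which is the modified Yang–Baxter
equation at `(x, y)` rearranged. -/

theorem LinearMap.forall_mem_graph_iff {R M M₂ : Type*} [Semiring R] [AddCommMonoid M]
    [AddCommMonoid M₂] [Module R M] [Module R M₂] (f : M →ₗ[R] M₂) {P : M × M₂ → Prop} :
    (∀ p ∈ f.graph, P p) ↔ ∀ x, P (x, f x) := by
  refine ⟨fun h x ↦ h _ ((f.mem_graph_iff _).2 rfl), fun h ⟨x, u⟩ hp ↦ ?_⟩
  obtain rfl : u = f x := hp
  exact h x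

theorem modifiedYangBaxter_iff_mem_graph {R L : Type*} [CommRing R] [LieRing L]
    [LieAlgebra R L] (lam : R) (D : L →ₗ[R] L) (x y : L) :
    ⁅D x, D y⁆ - D (⁅D x, y⁆ + ⁅x, D y⁆) = -(lam • ⁅x, y⁆) ↔
      ((⁅x, D y⁆ - ⁅y, D x⁆, lam • ⁅x, y⁆ + ⁅D x, D y⁆) : L × L) ∈ D.graph := by
  rw [D.mem_graph_iff, ← lie_skew y (D x), sub_neg_eq_add, add_comm ⁅x, D y⁆,
    sub_eq_iff_eq_add, eq_neg_add_iff_add_eq, eq_comm]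

/-- Let `L` be a Lie algebra over `K` and `lam ∈ K`; equip `L × L`
with the bracket `[(x,u),(y,v)]_M = ([x,v] − [y,u], lam•[x,y] + [u,v])`. A linear
map `D : L → L` satisfies the modified Yang-Baxter equation
`[Dx, Dy] − D([Dx, y] + [x, Dy]) = −lam•[x, y]` if and only if its graph
`Gr(D) = { (x, Dx) : x ∈ L }` is a Lie subalgebra of `(L × L, [·,·]_M)`. -/
theorem stmt11 (K L : Type*) [Field K] [LieRing L] [LieAlgebra K L]
    (lam : K) (D : L →ₗ[K] L) :
    (∀ x y : L, ⁅D x, D y⁆ - D (⁅D x, y⁆ + ⁅x, D y⁆) = -(lam • ⁅x, y⁆)) ↔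
    (∀ p ∈ D.graph, ∀ q ∈ D.graph,
      ((⁅p.1, q.2⁆ - ⁅q.1, p.2⁆, lam • ⁅p.1, q.1⁆ + ⁅p.2, q.2⁆) : L × L) ∈ D.graph) := by
  simp only [LinearMap.forall_mem_graph_iff, modifiedYangBaxter_iff_mem_graph]
end

section
/- Let (g, [·,·]_g) and (h, [·,·]_h) be Lie algebras over a field K, ρ : g → Der(h) a Lie algebra homomorphism into the derivations of h, λ ∈ K, and let D : g → h be a crossed homomorphism of weight λ, i.e., D([x,y]_g) = ρ(x)D(y) − ρ(y)D(x) + λ[D(x), D(y)]_h for all x, y ∈ g. Then the map ρ^D : g → End(h) defined by ρ^D(x)(u) = ρ(x)u + λ[D(x), u]_h is a representation of the Lie algebra g on the vector space h, i.e., ρ^D([x,y]_g) = ρ^D(x) ∘ ρ^D(y) − ρ^D(y) ∘ ρ^D(x) for all x, y ∈ g. -/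
/-!
Since `lam • ⁅D x, u⁆ = ⁅lam • D x, u⁆`, the operator `ρ^D(x)` is the derivation
`ρ x + ad (lam • D x)`. Commutators of derivations of the form `δ + ad a` are computed by
`⁅δ, ad b⁆ = ad (δ b)` and `⁅ad a, ad b⁆ = ad ⁅a, b⁆`, and the resulting inner part is
`ad (lam • D ⁅x, y⁆)` precisely because `lam • D` is a crossed homomorphism of weight one.
-/

variable {K L H : Type*} [Field K] [LieRing L] [LieAlgebra K L]
  [LieRing H] [LieAlgebra K H]

/-- The map `ρ^D(x)(u) = ρ(x)u + lam•[Dx, u]` induced by a crossed homomorphism. -/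
def rhoCH (ρ : L →ₗ⁅K⁆ LieDerivation K H H) (lam : K) (D : L →ₗ[K] H)
    (x : L) (u : H) : H :=
  ρ x u + lam • ⁅D x, u⁆

namespace LieDerivation

variable {R : Type*} [CommRing R] [LieAlgebra R H]

lemma lie_add_ad_add_ad (δ ε : LieDerivation R H H) (a b : H) :
    ⁅δ + ad R H a, ε + ad R H b⁆ = ⁅δ, ε⁆ + ad R H (δ b - ε a + ⁅a, b⁆) := by
  rw [add_lie, lie_add, lie_add, lie_der_ad_eq_ad_der, ← lie_skew (ad R H a) ε,
    lie_der_ad_eq_ad_der, ← LieHom.map_lie, map_add, map_sub]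
  abel

end LieDerivation

section CrossedHom

open LieDerivation

variable {R : Type*} [CommRing R] [LieAlgebra R L] [LieAlgebra R H]

def IsCrossedHom (ρ : L →ₗ⁅R⁆ LieDerivation R H H) (lam : R) (D : L →ₗ[R] H) : Prop :=
  ∀ x y : L, D ⁅x, y⁆ = ρ x (D y) - ρ y (D x) + lam • ⁅D x, D y⁆

def crossedAction (ρ : L →ₗ⁅R⁆ LieDerivation R H H) (lam : R) (D : L →ₗ[R] H) :
    L →ₗ[R] LieDerivation R H H :=
  ρ.toLinearMap + (ad R H).toLinearMap ∘ₗ (lam • D)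

variable {ρ : L →ₗ⁅R⁆ LieDerivation R H H} {lam : R} {D : L →ₗ[R] H}

@[simp]
lemma crossedAction_apply (x : L) : crossedAction ρ lam D x = ρ x + ad R H (lam • D x) := rfl

lemma IsCrossedHom.crossedAction_lie (hD : IsCrossedHom ρ lam D) (x y : L) :
    crossedAction ρ lam D ⁅x, y⁆ = ⁅crossedAction ρ lam D x, crossedAction ρ lam D y⁆ := by
  rw [crossedAction_apply, crossedAction_apply, crossedAction_apply, lie_add_ad_add_ad,
    LieHom.map_lie, hD]
  congr 2
  simp only [map_smul, smul_lie, lie_smul]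
  module

end CrossedHom

lemma rhoCH_eq_crossedAction (ρ : L →ₗ⁅K⁆ LieDerivation K H H) (lam : K) (D : L →ₗ[K] H)
    (x : L) (u : H) : rhoCH ρ lam D x u = crossedAction ρ lam D x u := by
  simp [rhoCH]

/-- Let `ρ : L → Der(H)` be an action of the Lie algebra `L` on the
Lie algebra `H`, `lam ∈ K`, and `D : L → H` a crossed homomorphism of weight
`lam`, i.e. `D[x,y] = ρ(x)Dy − ρ(y)Dx + lam•[Dx, Dy]`. Then
`ρ^D(x)(u) = ρ(x)u + lam•[Dx, u]` is a representation of the Lie algebra `L` on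
the vector space `H`. -/
theorem stmt12 (K L H : Type*) [Field K] [LieRing L] [LieAlgebra K L]
    [LieRing H] [LieAlgebra K H]
    (ρ : L →ₗ⁅K⁆ LieDerivation K H H) (lam : K) (D : L →ₗ[K] H)
    (hD : ∀ x y : L, D ⁅x, y⁆ = ρ x (D y) - ρ y (D x) + lam • ⁅D x, D y⁆) :
    ∀ (x y : L) (u : H),
      rhoCH ρ lam D ⁅x, y⁆ u =
        rhoCH ρ lam D x (rhoCH ρ lam D y u) - rhoCH ρ lam D y (rhoCH ρ lam D x u) := by
  intro x y u
  simp only [rhoCH_eq_crossedAction, IsCrossedHom.crossedAction_lie hD,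
    LieDerivation.commutator_apply]
end

section
/- Let (G, g, h) be a quasi-twilled Lie algebra over a field K and let B : h → g be any linear map. Define ψ : G → G by ψ(x + u) = x + B(u) + u for x ∈ g, u ∈ h. Then ψ is a linear automorphism of G and the twisted bracket Ω^B(X, Y) := ψ^{-1}([ψ(X), ψ(Y)]) is a Lie algebra structure on the underlying vector space of G; moreover, B is a deformation map of type II of (G, g, h) if and only if h is a Lie subalgebra of (G, Ω^B), i.e., if and only if ((G, Ω^B), g, h) is again a quasi-twilled Lie algebra. -/
/-! Write `ψ = 1 + N` with `N := B ∘ Ph`, viewed as an endomorphism of `G` with image in `g`.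
Since `Ph` kills `g`, `N² = 0`, so `ψ` is invertible with inverse `1 - N`, and any bracket
transported along a linear isomorphism is again a Lie bracket. For `W = ⁅ψ u, ψ v⁆` one has
`ψ⁻¹ W = (Pg W - B (Ph W)) + Ph W` with first summand in `g`, so `ψ⁻¹ W ∈ h` exactly when
`Pg W = B (Ph W)`, which is the deformation equation. -/

theorem isLieBracketOn_of_rightInverse {K V L : Type*} [Field K] [AddCommGroup V] [Module K V]
    [LieRing L] [LieAlgebra K L] (ψ : V →ₗ[K] L) (χ : L →ₗ[K] V)
    (hψχ : Function.RightInverse χ ψ) :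
    IsLieBracketOn K V (fun X Y => χ ⁅ψ X, ψ Y⁆) := by
  refine ⟨?_, ?_, ?_, ?_, ?_, ?_⟩ <;> intros
  · simp only [map_add, add_lie]
  · simp only [map_smul, smul_lie]
  · simp only [map_add, lie_add]
  · simp only [map_smul, lie_smul]
  · simp only [lie_self, map_zero]
  · simp only [hψχ _, ← map_add, lie_jacobi, map_zero]

namespace Submodule

variable {K G : Type*} [Field K] [AddCommGroup G] [Module K G] {g h : Submodule K G}

theorem mem_iff_eq_zero_of_isCompl (hcompl : IsCompl g h) {x : G} (hx : x ∈ g) :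
    x ∈ h ↔ x = 0 :=
  ⟨fun hxh => disjoint_def.mp hcompl.disjoint x hx hxh, fun h0 => h0 ▸ h.zero_mem⟩

variable {Pg : G →ₗ[K] g} {Ph : G →ₗ[K] h} (hP : ∀ X : G, (Pg X : G) + (Ph X : G) = X)
include hP

theorem proj_eq_zero_of_mem_isCompl (hcompl : IsCompl g h) {x : G} (hx : x ∈ g) :
    Ph x = 0 := by
  have hxg : (Ph x : G) ∈ g := by
    rw [eq_sub_of_add_eq' (hP x)]
    exact g.sub_mem hx (Pg x).2
  exact Subtype.ext ((mem_iff_eq_zero_of_isCompl hcompl hxg).mp (Ph x).2)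

theorem sub_apply_proj_mem_iff (hcompl : IsCompl g h) (B : h →ₗ[K] g) (X : G) :
    X - (B (Ph X) : G) ∈ h ↔ Pg X = B (Ph X) := by
  have hsplit : X - (B (Ph X) : G) = ((Pg X : G) - B (Ph X)) + Ph X := by
    nth_rw 1 [← hP X]
    abel
  rw [hsplit, h.add_mem_iff_left (Ph X).2,
    mem_iff_eq_zero_of_isCompl hcompl (g.sub_mem (Pg X).2 (B (Ph X)).2), sub_eq_zero,
    Subtype.ext_iff]

end Submodule

theorem stmt14_general (K G : Type*) [Field K] [LieRing G] [LieAlgebra K G]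
    (g h : Submodule K G) (hcompl : IsCompl g h)
    (Pg : G →ₗ[K] g) (Ph : G →ₗ[K] h)
    (hP : ∀ X : G, (Pg X : G) + (Ph X : G) = X)
    (B : h →ₗ[K] g)
    (ψ : G →ₗ[K] G)
    (hψ : ∀ (x : g) (u : h), ψ ((x : G) + (u : G)) = (x : G) + (B u : G) + (u : G)) :
    ∃ χ : G →ₗ[K] G,
      (∀ X : G, χ (ψ X) = X) ∧ (∀ X : G, ψ (χ X) = X) ∧
      IsLieBracketOn K G (fun X Y => χ ⁅ψ X, ψ Y⁆) ∧
      ((∀ u v : h, Pg ⁅(B u : G) + (u : G), (B v : G) + (v : G)⁆ =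
          B (Ph ⁅(B u : G) + (u : G), (B v : G) + (v : G)⁆)) ↔
        (∀ u ∈ h, ∀ v ∈ h, χ ⁅ψ u, ψ v⁆ ∈ h)) := by
  set N : G →ₗ[K] G := g.subtype ∘ₗ B ∘ₗ Ph
  have hN : ∀ X, N (N X) = 0 := fun X => by
    simp [N, Submodule.proj_eq_zero_of_mem_isCompl hP hcompl (B (Ph X)).2]
  have hψN : ψ = LinearMap.id + N := LinearMap.ext fun X => by
    have := hψ (Pg X) (Ph X)
    rw [hP X, add_right_comm, hP X] at this
    simpa [N] using this
  have hψh : ∀ u : h, ψ u = B u + u := fun u => by simpa using hψ 0 u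
  set χ : G →ₗ[K] G := LinearMap.id - N
  have hχψ : ∀ X, χ (ψ X) = X := fun X => by simp [χ, hψN, hN]
  have hψχ : ∀ X, ψ (χ X) = X := fun X => by simp [χ, hψN, hN]
  refine ⟨χ, hχψ, hψχ, isLieBracketOn_of_rightInverse ψ χ hψχ, ?_⟩
  have hχ : ∀ X, χ X = X - B (Ph X) := fun X => rfl
  simp only [Subtype.forall]
  refine forall₂_congr fun u hu => forall₂_congr fun v hv => ?_
  rw [hψh ⟨u, hu⟩, hψh ⟨v, hv⟩, hχ, Submodule.sub_apply_proj_mem_iff hP hcompl]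

/-- Let `(G, g, h)` be a quasi-twilled Lie algebra with projections
`Pg`, `Ph`, let `B : h → g` be linear, and let `ψ : G → G` be the linear map with
`ψ(x + u) = x + B(u) + u` for `x ∈ g`, `u ∈ h`. Then `ψ` is a linear automorphism
of `G` (it has a linear two-sided inverse `χ`), the twisted bracket
`Ω^B(X,Y) = χ⁅ψX, ψY⁆` is a Lie algebra structure on `G`, and `B` is a
deformation map of type II if and only if `h` is a Lie subalgebra of `(G, Ω^B)`,
i.e. iff `((G, Ω^B), g, h)` is again a quasi-twilled Lie algebra. -/
theorem stmt14 (K G : Type*) [Field K] [LieRing G] [LieAlgebra K G]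
    (g h : Submodule K G) (hcompl : IsCompl g h)
    (hsub : ∀ u ∈ h, ∀ v ∈ h, ⁅u, v⁆ ∈ h)
    (Pg : G →ₗ[K] g) (Ph : G →ₗ[K] h)
    (hP : ∀ X : G, (Pg X : G) + (Ph X : G) = X)
    (B : h →ₗ[K] g)
    (ψ : G →ₗ[K] G)
    (hψ : ∀ (x : g) (u : h), ψ ((x : G) + (u : G)) = (x : G) + (B u : G) + (u : G)) :
    ∃ χ : G →ₗ[K] G,
      (∀ X : G, χ (ψ X) = X) ∧ (∀ X : G, ψ (χ X) = X) ∧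
      IsLieBracketOn K G (fun X Y => χ ⁅ψ X, ψ Y⁆) ∧
      ((∀ u v : h, Pg ⁅(B u : G) + (u : G), (B v : G) + (v : G)⁆ =
          B (Ph ⁅(B u : G) + (u : G), (B v : G) + (v : G)⁆)) ↔
        (∀ u ∈ h, ∀ v ∈ h, χ ⁅ψ u, ψ v⁆ ∈ h)) :=
  stmt14_general K G g h hcompl Pg Ph hP B ψ hψ
end

section
/- Let (g, [·,·]_g) be a Lie algebra over a field K, ρ : g → End(V) a representation of g on a vector space V, and let B : V → g be a relative Rota-Baxter operator of weight 0 (an O-operator), i.e., [B(u), B(v)]_g = B(ρ(B(u))v − ρ(B(v))u) for all u, v ∈ V. Then the bracket [u, v]_B := ρ(B(u))v − ρ(B(v))u is a Lie algebra structure on V, and the map σ : V → End(g) defined by σ(u)(x) = [B(u), x]_g + B(ρ(x)u) is a representation of the Lie algebra (V, [·,·]_B) on the vector space g, i.e., σ([u,v]_B) = σ(u) ∘ σ(v) − σ(v) ∘ σ(u) for all u, v ∈ V. -/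
variable {K L V : Type*} [Field K] [LieRing L] [LieAlgebra K L]
  [AddCommGroup V] [Module K V]

/-- The bracket `[u, v]_B = ρ(Bu)v − ρ(Bv)u` on `V`. -/
def brO (ρ : L →ₗ[K] Module.End K V) (B : V →ₗ[K] L) (u v : V) : V :=
  ρ (B u) v - ρ (B v) u

/-- The map `σ(u)(x) = [Bu, x] + B(ρ(x)u)`. -/
def sigmaO (ρ : L →ₗ[K] Module.End K V) (B : V →ₗ[K] L) (u : V) (x : L) : L :=
  ⁅B u, x⁆ + B (ρ x u)

/-!
The O-operator identity says exactly that `B` carries `[·,·]_B` to the bracket of `L`, so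
`u ↦ ρ(Bu)` turns `[·,·]_B` into commutators of endomorphisms. A bracket of the form
`μ(u)v − μ(v)u` with this property satisfies the Jacobi identity, the cyclic sum cancelling
term by term. For `σ`, the Jacobi identity of `L` handles the adjoint part `[Bu, ·]`; the
O-operator identity rewrites the cross terms `[Bu, B(ρ(x)v)]` as values of `B`, and what remains
inside `B` cancels by the representation property of `ρ`.
-/

theorem jacobi_of_map_eq_commutator {K V : Type*} [CommSemiring K] [AddCommGroup V] [Module K V]
    (μ : V →ₗ[K] Module.End K V) (b : V → V → V) (hb : ∀ u v, b u v = μ u v - μ v u)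
    (hμ : ∀ u v, μ (b u v) = μ u * μ v - μ v * μ u) (x y z : V) :
    b x (b y z) + b y (b z x) + b z (b x y) = 0 := by
  rw [hb x (b y z), hb y (b z x), hb z (b x y), hμ, hμ, hμ]
  simp only [hb, map_sub, LinearMap.sub_apply, Module.End.mul_apply]
  abel

section

variable {K L V : Type*} [Field K] [LieRing L] [LieAlgebra K L] [AddCommGroup V] [Module K V]
  {ρ : L →ₗ[K] Module.End K V} {B : V →ₗ[K] L}
  (hB : ∀ u v : V, ⁅B u, B v⁆ = B (ρ (B u) v - ρ (B v) u))
include hB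

theorem map_brO (u v : V) : B (brO ρ B u v) = ⁅B u, B v⁆ := (hB u v).symm

variable (hρ : ∀ x y : L, ρ ⁅x, y⁆ = ρ x * ρ y - ρ y * ρ x)
include hρ

theorem isLieBracketOn_brO : IsLieBracketOn K V (brO ρ B) := by
  refine ⟨fun x y z => ?_, fun c x y => ?_, fun x y z => ?_, fun c x y => ?_,
    fun x => sub_self _, jacobi_of_map_eq_commutator (ρ ∘ₗ B) _ (fun _ _ => rfl) fun u v => ?_⟩
  · simp only [brO, map_add, LinearMap.add_apply]; abel
  · simp only [brO, map_smul, LinearMap.smul_apply, smul_sub]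
  · simp only [brO, map_add, LinearMap.add_apply]; abel
  · simp only [brO, map_smul, LinearMap.smul_apply, smul_sub]
  · simp only [LinearMap.comp_apply, map_brO hB, hρ]

theorem sigmaO_brO (u v : V) (x : L) :
    sigmaO ρ B (brO ρ B u v) x =
      sigmaO ρ B u (sigmaO ρ B v x) - sigmaO ρ B v (sigmaO ρ B u x) := by
  rw [sigmaO, map_brO hB, lie_lie]
  simp only [sigmaO, lie_add, map_add, LinearMap.add_apply, hB, hρ]
  simp only [brO, LinearMap.sub_apply, Module.End.mul_apply, map_sub]
  abel

end

/-- Let `ρ : L → End(V)` be a representation of a Lie algebra `L` on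
a vector space `V`, and let `B : V → L` be a relative Rota-Baxter operator of
weight 0 (an O-operator), i.e. `[Bu, Bv] = B(ρ(Bu)v − ρ(Bv)u)`. Then
`[u, v]_B = ρ(Bu)v − ρ(Bv)u` is a Lie algebra structure on `V`, and
`σ(u)(x) = [Bu, x] + B(ρ(x)u)` is a representation of `(V, [·,·]_B)` on the
vector space `L`. -/
theorem stmt17 (K L V : Type*) [Field K] [LieRing L] [LieAlgebra K L]
    [AddCommGroup V] [Module K V]
    (ρ : L →ₗ[K] Module.End K V)
    (hρ : ∀ x y : L, ρ ⁅x, y⁆ = ρ x * ρ y - ρ y * ρ x)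
    (B : V →ₗ[K] L)
    (hB : ∀ u v : V, ⁅B u, B v⁆ = B (ρ (B u) v - ρ (B v) u)) :
    IsLieBracketOn K V (brO ρ B) ∧
    (∀ (u v : V) (x : L),
      sigmaO ρ B (brO ρ B u v) x =
        sigmaO ρ B u (sigmaO ρ B v x) - sigmaO ρ B v (sigmaO ρ B u x)) :=
  ⟨isLieBracketOn_brO hB hρ, sigmaO_brO hB hρ⟩
end

section
/- Let (g, h; ρ, η) be a matched pair of Lie algebras over a field K and let B : h → g be a deformation map of the matched pair, i.e., [B(u), B(v)]_g − η(v)B(u) + η(u)B(v) = B([u,v]_h + ρ(B(u))v − ρ(B(v))u) for all u, v ∈ h. Then the bracket [u, v]_B := [u,v]_h + ρ(B(u))v − ρ(B(v))u is a Lie algebra structure on h, and the map σ : h → End(g) defined by σ(v)(x) = η(v)x + [B(v), x]_g + B(ρ(x)v) is a representation of the Lie algebra (h, [·,·]_B) on the vector space g, i.e., σ([u,v]_B) = σ(u) ∘ σ(v) − σ(v) ∘ σ(u) for all u, v ∈ h. -/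
variable {K L H : Type*} [Field K] [LieRing L] [LieAlgebra K L]
  [LieRing H] [LieAlgebra K H]

/-- The bracket `[u, v]_B = [u,v] + ρ(Bu)v − ρ(Bv)u` on `H`. -/
def brMP (ρ : L →ₗ[K] Module.End K H) (B : H →ₗ[K] L) (u v : H) : H :=
  ⁅u, v⁆ + ρ (B u) v - ρ (B v) u

/-- The map `σ(v)(x) = η(v)x + [Bv, x] + B(ρ(x)v)`. -/
def sigmaMP (ρ : L →ₗ[K] Module.End K H) (η : H →ₗ[K] Module.End K L)
    (B : H →ₗ[K] L) (v : H) (x : L) : L :=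
  η v x + ⁅B v, x⁆ + B (ρ x v)

section

variable (ρ : L →ₗ[K] Module.End K H) (η : H →ₗ[K] Module.End K L) (B : H →ₗ[K] L)

theorem brMP_jacobi (hρ : ∀ x y : L, ρ ⁅x, y⁆ = ρ x * ρ y - ρ y * ρ x)
    (hcomp1 : ∀ (x : L) (u v : H),
      ρ x ⁅u, v⁆ = ⁅ρ x u, v⁆ + ⁅u, ρ x v⁆ + ρ (η v x) u - ρ (η u x) v)
    (hB : ∀ u v : H,
      ⁅B u, B v⁆ - η v (B u) + η u (B v) = B (⁅u, v⁆ + ρ (B u) v - ρ (B v) u))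
    (u v w : H) :
    brMP ρ B u (brMP ρ B v w) + brMP ρ B v (brMP ρ B w u) + brMP ρ B w (brMP ρ B u v) = 0 := by
  simp only [brMP, ← hB, hρ, hcomp1, map_add, map_sub, LinearMap.add_apply, LinearMap.sub_apply,
    Module.End.mul_apply, lie_add, lie_sub]
  linear_combination (norm := abel) lie_jacobi u v w - lie_skew (ρ (B u) v) w -
    lie_skew (ρ (B v) w) u - lie_skew (ρ (B w) u) v

theorem isLieBracketOn_brMP (hρ : ∀ x y : L, ρ ⁅x, y⁆ = ρ x * ρ y - ρ y * ρ x)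
    (hcomp1 : ∀ (x : L) (u v : H),
      ρ x ⁅u, v⁆ = ⁅ρ x u, v⁆ + ⁅u, ρ x v⁆ + ρ (η v x) u - ρ (η u x) v)
    (hB : ∀ u v : H,
      ⁅B u, B v⁆ - η v (B u) + η u (B v) = B (⁅u, v⁆ + ρ (B u) v - ρ (B v) u)) :
    IsLieBracketOn K H (brMP ρ B) := by
  refine ⟨fun x y z => ?_, fun c x y => ?_, fun x y z => ?_, fun c x y => ?_, fun x => ?_,
    brMP_jacobi ρ η B hρ hcomp1 hB⟩
  · simp only [brMP, add_lie, map_add, LinearMap.add_apply]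
    abel
  · simp only [brMP, smul_lie, map_smul, LinearMap.smul_apply, smul_add, smul_sub]
  · simp only [brMP, lie_add, map_add, LinearMap.add_apply]
    abel
  · simp only [brMP, lie_smul, map_smul, LinearMap.smul_apply, smul_add, smul_sub]
  · simp [brMP]

theorem sigmaMP_brMP (hρ : ∀ x y : L, ρ ⁅x, y⁆ = ρ x * ρ y - ρ y * ρ x)
    (hη : ∀ u v : H, η ⁅u, v⁆ = η u * η v - η v * η u)
    (hcomp1 : ∀ (x : L) (u v : H),
      ρ x ⁅u, v⁆ = ⁅ρ x u, v⁆ + ⁅u, ρ x v⁆ + ρ (η v x) u - ρ (η u x) v)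
    (hcomp2 : ∀ (u : H) (x y : L),
      η u ⁅x, y⁆ = ⁅η u x, y⁆ + ⁅x, η u y⁆ + η (ρ y u) x - η (ρ x u) y)
    (hB : ∀ u v : H,
      ⁅B u, B v⁆ - η v (B u) + η u (B v) = B (⁅u, v⁆ + ρ (B u) v - ρ (B v) u))
    (u v : H) (x : L) :
    sigmaMP ρ η B (brMP ρ B u v) x =
      sigmaMP ρ η B u (sigmaMP ρ η B v x) - sigmaMP ρ η B v (sigmaMP ρ η B u x) := by
  have hu := hB u (ρ x v)
  have hv := hB v (ρ x u)
  have hskew : B ⁅ρ x u, v⁆ = -B ⁅v, ρ x u⁆ := by rw [← map_neg, lie_skew]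
  simp only [sigmaMP, brMP, ← hB u v, hρ, hη, hcomp1, hcomp2, map_add, map_sub,
    LinearMap.add_apply, LinearMap.sub_apply, Module.End.mul_apply, lie_add, add_lie, sub_lie]
    at hu hv ⊢
  linear_combination (norm := abel) hv - hu + lie_lie (B u) (B v) x + hskew

end

/-- Let `(L, H; ρ, η)` be a matched pair of Lie algebras and let
`B : H → L` be a deformation map of the matched pair, i.e.
`[Bu, Bv] − η(v)Bu + η(u)Bv = B([u,v] + ρ(Bu)v − ρ(Bv)u)`. Then
`[u, v]_B = [u,v] + ρ(Bu)v − ρ(Bv)u` is a Lie algebra structure on `H`, and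
`σ(v)(x) = η(v)x + [Bv, x] + B(ρ(x)v)` is a representation of `(H, [·,·]_B)` on
the vector space `L`. -/
theorem stmt19 (K L H : Type*) [Field K] [LieRing L] [LieAlgebra K L]
    [LieRing H] [LieAlgebra K H]
    (ρ : L →ₗ[K] Module.End K H) (η : H →ₗ[K] Module.End K L)
    (hρ : ∀ x y : L, ρ ⁅x, y⁆ = ρ x * ρ y - ρ y * ρ x)
    (hη : ∀ u v : H, η ⁅u, v⁆ = η u * η v - η v * η u)
    (hcomp1 : ∀ (x : L) (u v : H),
      ρ x ⁅u, v⁆ = ⁅ρ x u, v⁆ + ⁅u, ρ x v⁆ + ρ (η v x) u - ρ (η u x) v)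
    (hcomp2 : ∀ (u : H) (x y : L),
      η u ⁅x, y⁆ = ⁅η u x, y⁆ + ⁅x, η u y⁆ + η (ρ y u) x - η (ρ x u) y)
    (B : H →ₗ[K] L)
    (hB : ∀ u v : H,
      ⁅B u, B v⁆ - η v (B u) + η u (B v) = B (⁅u, v⁆ + ρ (B u) v - ρ (B v) u)) :
    IsLieBracketOn K H (brMP ρ B) ∧
    (∀ (u v : H) (x : L),
      sigmaMP ρ η B (brMP ρ B u v) x =
        sigmaMP ρ η B u (sigmaMP ρ η B v x) - sigmaMP ρ η B v (sigmaMP ρ η B u x)) :=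
  ⟨isLieBracketOn_brMP ρ η B hρ hcomp1 hB, sigmaMP_brMP ρ η B hρ hη hcomp1 hcomp2 hB⟩
end
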